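/- arXiv:2005.06516 — 3 statements merged into one kernel-verified Lean document; each statement's English description precedes it below -/
import Mathlib

section
/- Assume the nondegeneracy condition A(t) ≥ c* t² I for |t| ≤ t⁰ (c* > 0). Suppose that in the analytic eigenvalue expansions λ_l(t) = γ_l t² + μ_l t³ + ν_l t⁴ + … (l = 1,…,n) of A(t) one has μ_l = 0 for all l (i.e., N₀ = 0), while ν_j ≠ 0 for at least one j (i.e., 𝒩^{(q)} ≠ 0 for some q). Let τ ≠ 0 and 0 ≤ s < 2. Then there does not exist a constant C(τ) > 0 such that ‖e^{-iτε^{-2}A(t)}P − e^{-iτε^{-2}t²SP}P‖ · ε^{s}(t²+ε²)^{-s/2} ≤ C(τ)ε for all sufficiently small |t| and ε > 0. -/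
/-!
Birman–Suslina abstract operator-theoretic scheme.

`BSScheme` encodes: complex separable Hilbert spaces `H`, `Hs`; a densely defined
closed operator `X₀ : H → Hs`; a bounded operator `X₁`; the family
`X(t) = X₀ + t X₁` and the selfadjoint nonnegative operator family
`A(t) = X(t)* X(t)` (encoded through its quadratic form); the kernel
`𝔑 = Ker A(0) = Ker X₀` of finite dimension `n` with `n ≤ dim Ker X₀*`;
the orthogonal projections `P`, `P*` onto `𝔑` and `𝔑* = Ker X₀* = (Ran X₀)ᗮ`;
the spectral gap data `0 < 8δ < d⁰` (the point `0` is isolated in the spectrum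
of `A₀`); the operator `Z` (solving the weak problem `X₀*(X₀ ψ + X₁ ω) = 0`);
and the unitary group `E t τ = e^{-iτ A(t)}` generated by `A(t)`.
-/

noncomputable section

open ContinuousLinearMap

structure BSScheme where
  H : Type
  Hs : Type
  [instH₁ : NormedAddCommGroup H]
  [instH₂ : InnerProductSpace ℂ H]
  [instH₃ : CompleteSpace H]
  [instHs₁ : NormedAddCommGroup Hs]
  [instHs₂ : InnerProductSpace ℂ Hs]
  [instHs₃ : CompleteSpace Hs]
  /-- densely defined closed operator `X₀` -/
  X₀ : H →ₗ.[ℂ] Hs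
  X₀_dense : Dense (X₀.domain : Set H)
  X₀_closed : IsClosed (X₀.graph : Set (H × Hs))
  /-- bounded operator `X₁` -/
  X₁ : H →L[ℂ] Hs
  n : ℕ
  n_pos : 0 < n
  /-- the kernel `𝔑 = Ker X₀ = Ker A(0)` -/
  ker : Submodule ℂ H
  ker_def : ∀ u : H, u ∈ ker ↔ ∃ hu : u ∈ X₀.domain, X₀ ⟨u, hu⟩ = 0
  ker_findim : FiniteDimensional ℂ ker
  ker_rank : Module.finrank ℂ ker = n
  /-- the kernel `𝔑* = Ker X₀* = (Ran X₀)ᗮ` -/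
  kerStar : Submodule ℂ Hs
  kerStar_def : ∀ v : Hs, v ∈ kerStar ↔ ∀ u : X₀.domain, (inner ℂ (X₀ u) v : ℂ) = 0
  rank_le : (n : Cardinal) ≤ Module.rank ℂ kerStar
  /-- the orthogonal projection onto `𝔑` -/
  P : H →L[ℂ] H
  P_mem : ∀ u, P u ∈ ker
  P_fix : ∀ u ∈ ker, P u = u
  P_sa : IsSelfAdjoint P
  /-- the orthogonal projection onto `𝔑*` -/
  Pstar : Hs →L[ℂ] Hs
  Pstar_mem : ∀ v, Pstar v ∈ kerStar
  Pstar_fix : ∀ v ∈ kerStar, Pstar v = v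
  Pstar_sa : IsSelfAdjoint Pstar
  /-- `d⁰` is the distance from the isolated spectral point `0` to the rest of the
  spectrum of `A₀`: the form `‖X₀ u‖²` is `≥ d⁰‖u‖²` on `𝔑ᗮ` -/
  d0 : ℝ
  δ : ℝ
  δ_pos : 0 < δ
  gap : ∀ u : X₀.domain, (u : H) ∈ kerᗮ → d0 * ‖(u : H)‖ ^ 2 ≤ ‖X₀ u‖ ^ 2
  δ_small : 8 * δ < d0
  /-- the selfadjoint operator family `A(t) = X(t)* X(t)` generated by the closed
  quadratic form `‖X(t)u‖²`, `u ∈ Dom X₀` -/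
  A : ℝ → (H →ₗ.[ℂ] H)
  A_dense : ∀ t, Dense ((A t).domain : Set H)
  A_dom : ∀ t, (A t).domain ≤ X₀.domain
  A_form : ∀ (t : ℝ) (u : (A t).domain) (v : X₀.domain),
    (inner ℂ ((A t) u) (v : H) : ℂ) =
      inner ℂ (X₀ ⟨(u : H), A_dom t u.2⟩ + t • X₁ (u : H)) (X₀ v + t • X₁ (v : H))
  /-- the operator `Z`: `Z u = ψ(Pu)` where `ψ ∈ Dom X₀ ∩ 𝔑ᗮ` is the weak solution
  of `X₀*(X₀ ψ + X₁ ω) = 0`, `ω = Pu` -/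
  Z : H →L[ℂ] H
  Z_proj : ∀ u : H, Z (P u) = Z u
  Z_dom : ∀ u : H, Z u ∈ X₀.domain
  Z_perp : ∀ u : H, Z u ∈ kerᗮ
  Z_sol : ∀ (u : H) (v : X₀.domain),
    (inner ℂ (X₀ ⟨Z u, Z_dom u⟩ + X₁ (P u)) (X₀ v) : ℂ) = 0
  /-- `E t τ = e^{-iτ A(t)}`: the unitary group generated by `A(t)` -/
  E : ℝ → ℝ → (H →L[ℂ] H)
  E_zero : ∀ t, E t 0 = ContinuousLinearMap.id ℂ H
  E_group : ∀ t τ σ, E t (τ + σ) = (E t τ).comp (E t σ)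
  E_isometry : ∀ t τ u, ‖E t τ u‖ = ‖u‖
  E_gen : ∀ (t τ : ℝ) (u : (A t).domain),
    HasDerivAt (fun s : ℝ => E t s (u : H))
      (-(Complex.I • (E t τ ((A t) u)))) τ

attribute [instance] BSScheme.instH₁ BSScheme.instH₂ BSScheme.instH₃
attribute [instance] BSScheme.instHs₁ BSScheme.instHs₂ BSScheme.instHs₃

namespace BSScheme

variable (S : BSScheme)

/-- `t⁰ = δ^{1/2} ‖X₁‖⁻¹` -/
def t0 : ℝ := Real.sqrt S.δ / ‖S.X₁‖

/-- `R P = P* X₁ P` -/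
def RP : S.H →L[ℂ] S.Hs := S.Pstar ∘L S.X₁ ∘L S.P

/-- the spectral germ `S = P X₁* P* X₁ |_𝔑`, extended by zero to `H`
(the operator `S P`) -/
def germ : S.H →L[ℂ] S.H :=
  S.P ∘L (ContinuousLinearMap.adjoint S.X₁) ∘L S.Pstar ∘L S.X₁ ∘L S.P

/-- the operator `N = Z* X₁* R P + (R P)* X₁ Z` -/
def Nop : S.H →L[ℂ] S.H :=
  (ContinuousLinearMap.adjoint (S.X₁ ∘L S.Z)) ∘L S.RP
    + (ContinuousLinearMap.adjoint S.RP) ∘L (S.X₁ ∘L S.Z)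

end BSScheme

/-!  Analytic branches of eigenvalues and eigenvectors of `A(t)` near `t = 0`:
for `|t| ≤ t_*` the eigenvalues of `A(t)` in `[0, δ]` are
`λ_l(t) = γ_l t² + μ_l t³ + ν_l t⁴ + …` with analytic orthonormal eigenvectors
`φ_l(t) = ω_l + O(t)`, where `{ω_l}` is an orthonormal basis of `𝔑`
consisting of eigenvectors of the germ: `S ω_l = γ_l ω_l`. -/
structure SpecData (S : BSScheme) where
  tstar : ℝ
  tstar_pos : 0 < tstar
  lam : Fin S.n → ℝ → ℝ
  φ : Fin S.n → ℝ → S.H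
  ω : Fin S.n → S.H
  γ : Fin S.n → ℝ
  μ : Fin S.n → ℝ
  ν : Fin S.n → ℝ
  ω_mem : ∀ l, ω l ∈ S.ker
  ω_orthonormal : Orthonormal ℂ ω
  germ_eig : ∀ l, S.germ (ω l) = (γ l : ℂ) • ω l
  φ_orthonormal : ∀ t : ℝ, |t| ≤ tstar → Orthonormal ℂ (fun l => φ l t)
  φ_eig : ∀ (l) (t : ℝ), |t| ≤ tstar →
    ∃ hd : φ l t ∈ (S.A t).domain, (S.A t) ⟨φ l t, hd⟩ = (lam l t : ℂ) • φ l t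
  lam_nonneg : ∀ l t, |t| ≤ tstar → 0 ≤ lam l t
  lam_le : ∀ l t, |t| ≤ tstar → lam l t ≤ S.δ
  φ_expansion : ∃ c : ℝ, ∀ (l) (t : ℝ), |t| ≤ tstar → ‖φ l t - ω l‖ ≤ c * |t|
  lam_expansion : ∃ c : ℝ, ∀ (l) (t : ℝ), |t| ≤ tstar →
    |lam l t - (γ l * t ^ 2 + μ l * t ^ 3 + ν l * t ^ 4)| ≤ c * |t| ^ 5

namespace SpecData

variable {S : BSScheme} (SD : SpecData S)

/-- the rank-one projection `( ·, x) x` -/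
noncomputable def rkOne (x : S.H) : S.H →L[ℂ] S.H := (innerSL ℂ x).smulRight x

/-- the orthogonal projection onto the eigenspace of the germ `S`
corresponding to the eigenvalue `a` (zero if `a` is not an eigenvalue) -/
noncomputable def eigProj (a : ℝ) : S.H →L[ℂ] S.H :=
  letI := Classical.decEq ℝ
  ∑ l : Fin S.n, if SD.γ l = a then SpecData.rkOne (SD.ω l) else 0

/-- the operator `N₀ = Σ_l μ_l ( ·, ω_l) ω_l` (the diagonal part of `N`) -/
noncomputable def N0op : S.H →L[ℂ] S.H :=
  ∑ l : Fin S.n, (SD.μ l : ℂ) • SpecData.rkOne (SD.ω l)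

end SpecData

/-!
Test both exponentials on the germ eigenvector `ω_j` with `ν_j ≠ 0`. As `μ_j = 0`,
`λ_j(t) = γ_j t² + ν_j t⁴ + O(t⁵)`, and `e^{-iτε⁻²A(t)}`, `e^{-iτε⁻²t²S}` multiply
`φ_j(t) = ω_j + O(t)` and `ω_j` by phases whose difference is `τν_j t⁴/ε² + O(t⁵/ε²)`.
Along `ε = a t²` with `a² = |τν_j|/π` this difference tends to `±π`, so the norm of the
difference of the exponentials is at least `2 - o(1)`, while the smoothing factor divided
by `ε` grows like `t^{s-2} → ∞` because `s < 2`.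
-/

open Filter Topology

theorem ContinuousLinearMap.exp_smul_apply_of_apply_eq_smul {E : Type*} [NormedAddCommGroup E]
    [NormedSpace ℂ E] [CompleteSpace E] {T : E →L[ℂ] E} {x : E} {γ : ℂ} (hx : T x = γ • x)
    (c : ℂ) : NormedSpace.exp (c • T) x = Complex.exp (c * γ) • x := by
  have hpow (k : ℕ) : ((c • T) ^ k) x = (c * γ) ^ k • x := by
    induction k with
    | zero => simp
    | succ k ih =>
      rw [pow_succ', ContinuousLinearMap.mul_def, comp_apply, ih]
      simp [hx, smul_smul, pow_succ, mul_comm]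
  have hT := (NormedSpace.exp_series_hasSum_exp' (𝕂 := ℂ) (c • T)).mapL (apply ℂ E x)
  have hγ := (NormedSpace.exp_series_hasSum_exp' (𝕂 := ℂ) (c * γ)).smul_const x
  rw [Complex.exp_eq_exp_ℂ]
  refine hT.unique ?_
  simpa [hpow, smul_smul] using hγ

theorem Complex.exp_neg_I_mul_of_abs_eq_pi {x : ℝ} (hx : |x| = Real.pi) :
    Complex.exp (-(Complex.I * x)) = -1 := by
  rcases (abs_eq Real.pi_pos.le).mp hx with rfl | rfl
  · simpa [mul_comm] using Complex.exp_neg_pi_mul_I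
  · simpa [mul_comm] using Complex.exp_pi_mul_I

theorem tendsto_sub_div_pow_four_of_abs_sub_le {f : ℝ → ℝ} {γ ν c r : ℝ} (hr : 0 < r)
    (hf : ∀ t, |t| ≤ r → |f t - (γ * t ^ 2 + ν * t ^ 4)| ≤ c * |t| ^ 5) :
    Tendsto (fun t => (f t - γ * t ^ 2) / t ^ 4) (𝓝[≠] 0) (𝓝 ν) := by
  rw [tendsto_iff_norm_sub_tendsto_zero]
  have hlim : Tendsto (fun t : ℝ => c * |t|) (𝓝[≠] 0) (𝓝 0) := by
    simpa using ((continuous_abs.tendsto (0 : ℝ)).const_mul c).mono_left nhdsWithin_le_nhds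
  refine squeeze_zero' (.of_forall fun _ => norm_nonneg _) ?_ hlim
  filter_upwards [self_mem_nhdsWithin, nhdsWithin_le_nhds (Metric.closedBall_mem_nhds 0 hr)]
    with t (ht : t ≠ 0) (htr : dist t 0 ≤ r)
  rw [Real.dist_0_eq_abs] at htr
  have ht4 : 0 < |t| ^ 4 := by positivity
  calc ‖(f t - γ * t ^ 2) / t ^ 4 - ν‖ = |f t - (γ * t ^ 2 + ν * t ^ 4)| / |t| ^ 4 := by
        rw [Real.norm_eq_abs, ← abs_pow, ← abs_div]
        congr 1
        field_simp
        ring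
    _ ≤ c * |t| ^ 5 / |t| ^ 4 := by gcongr; exact hf t htr
    _ = c * |t| := by field_simp

theorem tendsto_smoothing_div_atTop {a s : ℝ} (ha : 0 < a) (hs : s < 2) :
    Tendsto (fun t : ℝ => (a * t ^ 2) ^ s / (t ^ 2 + (a * t ^ 2) ^ 2) ^ (s / 2) / (a * t ^ 2))
      (𝓝[>] 0) atTop := by
  have hfactor : Tendsto (fun t : ℝ => a ^ (s - 1) / (1 + a ^ 2 * t ^ 2) ^ (s / 2))
      (𝓝[>] 0) (𝓝 (a ^ (s - 1))) := by
    have : Continuous fun t : ℝ => a ^ (s - 1) / (1 + a ^ 2 * t ^ 2) ^ (s / 2) :=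
      continuous_const.div ((by fun_prop : Continuous fun t : ℝ => 1 + a ^ 2 * t ^ 2).rpow_const
        fun t => Or.inl (by positivity)) fun t => (Real.rpow_pos_of_pos (by positivity) _).ne'
    simpa using (this.tendsto 0).mono_left nhdsWithin_le_nhds
  refine ((hfactor.pos_mul_atTop (Real.rpow_pos_of_pos ha _)
    (tendsto_rpow_neg_nhdsGT_zero (by linarith : s - 2 < 0)))).congr' ?_
  filter_upwards [self_mem_nhdsWithin] with t (ht : 0 < t)
  have hX : 0 < 1 + a ^ 2 * t ^ 2 := by positivity
  have hsum : t ^ 2 + (a * t ^ 2) ^ 2 = t ^ 2 * (1 + a ^ 2 * t ^ 2) := by ring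
  have ht2 : (t ^ 2) ^ (s / 2) = t ^ s := by
    rw [← Real.rpow_natCast_mul ht.le]; push_cast; ring_nf
  have ht2s : (t ^ 2) ^ s = t ^ s * t ^ s := by
    rw [← Real.rpow_natCast_mul ht.le, ← Real.rpow_add ht]; push_cast; ring_nf
  have hts : t ^ (s - 2) = t ^ s / t ^ 2 := by
    rw [Real.rpow_sub ht, Real.rpow_two]
  rw [hsum, Real.mul_rpow (by positivity) hX.le, Real.mul_rpow ha.le (by positivity), ht2, ht2s,
    Real.rpow_sub_one ha.ne', hts]
  have : 0 < t ^ s := Real.rpow_pos_of_pos ht s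
  have : 0 < (1 + a ^ 2 * t ^ 2) ^ (s / 2) := Real.rpow_pos_of_pos hX _
  field_simp

namespace BSScheme

theorem E_apply_of_eigen (S : BSScheme) {t lam : ℝ} {φ : S.H} (hd : φ ∈ (S.A t).domain)
    (heig : S.A t ⟨φ, hd⟩ = (lam : ℂ) • φ) (σ : ℝ) :
    S.E t σ φ = Complex.exp (-(Complex.I * (σ * lam : ℝ))) • φ := by
  have hderiv (σ : ℝ) :
      HasDerivAt (fun s : ℝ => Complex.exp (Complex.I * lam * s) • S.E t s φ) 0 σ := by
    have hexp : HasDerivAt (fun s : ℝ => Complex.exp (Complex.I * lam * s))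
        (Complex.exp (Complex.I * lam * σ) * (Complex.I * lam)) σ := by
      simpa using ((Complex.ofRealCLM.hasDerivAt (x := σ)).const_mul (Complex.I * lam)).cexp
    have hE := S.E_gen t σ ⟨φ, hd⟩
    rw [heig, map_smul] at hE
    exact (hexp.smul hE).congr_deriv (by module)
  have hconst := is_const_of_deriv_eq_zero (fun x => (hderiv x).differentiableAt)
    (fun x => (hderiv x).deriv) σ 0
  simp only [Complex.ofReal_zero, mul_zero, Complex.exp_zero, one_smul, S.E_zero, id_apply]
    at hconst
  conv_rhs => rw [← hconst]
  rw [smul_smul, ← Complex.exp_add, Complex.ofReal_mul]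
  ring_nf
  simp

end BSScheme

namespace SpecData

variable {S : BSScheme} (SD : SpecData S)

theorem tendsto_φ (j : Fin S.n) : Tendsto (fun t => SD.φ j t) (𝓝 0) (𝓝 (SD.ω j)) := by
  obtain ⟨c, hc⟩ := SD.φ_expansion
  rw [tendsto_iff_norm_sub_tendsto_zero]
  refine squeeze_zero' (.of_forall fun _ => norm_nonneg _) ?_
    (by simpa using (continuous_abs.tendsto (0 : ℝ)).const_mul c)
  filter_upwards [Metric.closedBall_mem_nhds 0 SD.tstar_pos] with t ht
  exact hc j t (by simpa using ht)

theorem norm_exp_phase_sub_one_le (j : Fin S.n) {t : ℝ} (ht : |t| ≤ SD.tstar) (σ : ℝ) :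
    ‖Complex.exp (-(Complex.I * (σ * (SD.lam j t - SD.γ j * t ^ 2) : ℝ))) - 1‖ ≤
      ‖(S.E t σ - NormedSpace.exp ((-Complex.I * ((σ * t ^ 2 : ℝ) : ℂ)) • S.germ)) ∘L S.P‖
        + 2 * ‖SD.φ j t - SD.ω j‖ := by
  obtain ⟨hd, heig⟩ := SD.φ_eig j t ht
  set T := (S.E t σ - NormedSpace.exp ((-Complex.I * ((σ * t ^ 2 : ℝ) : ℂ)) • S.germ)) ∘L S.P
  set e₁ := Complex.exp (-(Complex.I * (σ * SD.lam j t : ℝ))) with he₁_def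
  set e₂ := Complex.exp (-(Complex.I * (σ * t ^ 2 * SD.γ j : ℝ))) with he₂_def
  have hunit (x : ℝ) : ‖Complex.exp (-(Complex.I * x))‖ = 1 := by
    rw [show -(Complex.I * x) = ((-x : ℝ) : ℂ) * Complex.I by push_cast; ring,
      Complex.norm_exp_ofReal_mul_I]
  have hω : ‖SD.ω j‖ = 1 := SD.ω_orthonormal.1 j
  have hphase : e₁ - e₂ =
      e₂ * (Complex.exp (-(Complex.I * (σ * (SD.lam j t - SD.γ j * t ^ 2) : ℝ))) - 1) := by
    rw [mul_sub, mul_one, ← Complex.exp_add, he₁_def, he₂_def]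
    push_cast
    ring_nf
  have hTω : T (SD.ω j) = (e₁ - e₂) • SD.ω j + e₁ • (SD.φ j t - SD.ω j)
      + S.E t σ (SD.ω j - SD.φ j t) := by
    have hexp : NormedSpace.exp ((-Complex.I * ((σ * t ^ 2 : ℝ) : ℂ)) • S.germ) (SD.ω j)
        = e₂ • SD.ω j := by
      rw [ContinuousLinearMap.exp_smul_apply_of_apply_eq_smul (SD.germ_eig j), he₂_def]
      push_cast
      ring_nf
    simp only [T, comp_apply, S.P_fix _ (SD.ω_mem j), sub_apply, hexp, map_sub,
      S.E_apply_of_eigen hd heig, ← he₁_def]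
    module
  have hTω_le : ‖T (SD.ω j)‖ ≤ ‖T‖ := by simpa [hω] using T.le_opNorm (SD.ω j)
  calc _ = ‖(e₁ - e₂) • SD.ω j‖ := by rw [norm_smul, hω, hphase, norm_mul, hunit]; ring
    _ = ‖T (SD.ω j) - e₁ • (SD.φ j t - SD.ω j) - S.E t σ (SD.ω j - SD.φ j t)‖ := by
        rw [hTω]; abel_nf
    _ ≤ ‖T (SD.ω j)‖ + ‖e₁ • (SD.φ j t - SD.ω j)‖ + ‖S.E t σ (SD.ω j - SD.φ j t)‖ :=
        norm_sub_le_of_le (norm_sub_le _ _) le_rfl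
    _ ≤ ‖T‖ + 2 * ‖SD.φ j t - SD.ω j‖ := by
        rw [norm_smul, hunit, S.E_isometry, norm_sub_rev (SD.ω j)]
        linarith

theorem eventually_one_le_norm_exp_sub (hμ : ∀ l, SD.μ l = 0) {j : Fin S.n} {τ a : ℝ}
    (ha : |τ * SD.ν j / a ^ 2| = Real.pi) :
    ∀ᶠ t in 𝓝[>] 0, 1 ≤ ‖(S.E t (τ / (a * t ^ 2) ^ 2) - NormedSpace.exp
        ((-Complex.I * ((τ / (a * t ^ 2) ^ 2 * t ^ 2 : ℝ) : ℂ)) • S.germ)) ∘L S.P‖ := by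
  have ha₀ : a ≠ 0 := by
    rintro rfl
    simp [Real.pi_ne_zero.symm] at ha
  obtain ⟨c, hc⟩ := SD.lam_expansion
  have hquartic : Tendsto (fun t => (SD.lam j t - SD.γ j * t ^ 2) / t ^ 4) (𝓝[≠] 0)
      (𝓝 (SD.ν j)) :=
    tendsto_sub_div_pow_four_of_abs_sub_le SD.tstar_pos fun t ht => by
      simpa [hμ j] using hc j t ht
  have hθ : Tendsto (fun t => τ / (a * t ^ 2) ^ 2 * (SD.lam j t - SD.γ j * t ^ 2)) (𝓝[>] 0)
      (𝓝 (τ * SD.ν j / a ^ 2)) := by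
    rw [show τ * SD.ν j / a ^ 2 = τ / a ^ 2 * SD.ν j by ring]
    refine ((hquartic.const_mul _).mono_left (nhdsGT_le_nhdsNE 0)).congr' ?_
    filter_upwards [self_mem_nhdsWithin] with t (ht : 0 < t)
    field_simp
  have hgap : Tendsto (fun t => ‖Complex.exp (-(Complex.I *
      (τ / (a * t ^ 2) ^ 2 * (SD.lam j t - SD.γ j * t ^ 2) : ℝ))) - 1‖
      - 2 * ‖SD.φ j t - SD.ω j‖) (𝓝[>] 0) (𝓝 2) := by
    have h₁ : Tendsto (fun t => ‖Complex.exp (-(Complex.I *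
        (τ / (a * t ^ 2) ^ 2 * (SD.lam j t - SD.γ j * t ^ 2) : ℝ))) - 1‖) (𝓝[>] 0) (𝓝 2) := by
      have := ((by fun_prop : Continuous fun x : ℝ => ‖Complex.exp (-(Complex.I * x)) - 1‖)
        |>.tendsto _).comp hθ
      rwa [Complex.exp_neg_I_mul_of_abs_eq_pi ha, show ‖(-1 : ℂ) - 1‖ = 2 by norm_num] at this
    have h₂ : Tendsto (fun t => ‖SD.φ j t - SD.ω j‖) (𝓝[>] 0) (𝓝 0) := by
      simpa using ((SD.tendsto_φ j).sub_const (SD.ω j)).norm.mono_left nhdsWithin_le_nhds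
    simpa using h₁.sub (h₂.const_mul 2)
  filter_upwards [hgap.eventually (lt_mem_nhds one_lt_two),
    nhdsWithin_le_nhds (Metric.closedBall_mem_nhds 0 SD.tstar_pos)] with t hgt ht
  linarith [SD.norm_exp_phase_sub_one_le j (by simpa using ht) (τ / (a * t ^ 2) ^ 2)]

end SpecData

theorem exp_approx_smoothing_sharp_general (S : BSScheme) (SD : SpecData S)
    (hμ : ∀ l, SD.μ l = 0) (hν : ∃ j, SD.ν j ≠ 0)
    (τ : ℝ) (hτ : τ ≠ 0) (s : ℝ) (hs2 : s < 2) :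
    ¬ ∃ C : ℝ, 0 < C ∧ ∃ t₁ > (0 : ℝ), ∃ ε₁ > (0 : ℝ), ∀ t ε : ℝ,
        |t| ≤ t₁ → 0 < ε → ε ≤ ε₁ →
        ‖(S.E t (τ / ε ^ 2)
            - NormedSpace.exp
                (((-Complex.I) * ((τ / ε ^ 2 * t ^ 2 : ℝ) : ℂ)) • S.germ))
            ∘L S.P‖ * (ε ^ s / (t ^ 2 + ε ^ 2) ^ (s / 2)) ≤ C * ε := by
  rintro ⟨C, -, t₁, ht₁, ε₁, hε₁, hbound⟩
  obtain ⟨j, hj⟩ := hν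
  have hp : 0 < |τ * SD.ν j| := abs_pos.mpr (mul_ne_zero hτ hj)
  set a := √(|τ * SD.ν j| / Real.pi)
  have ha : 0 < a := Real.sqrt_pos.mpr (by positivity)
  have hphase : |τ * SD.ν j / a ^ 2| = Real.pi := by
    rw [Real.sq_sqrt (by positivity), abs_div, abs_div, abs_abs, abs_of_pos Real.pi_pos]
    field_simp
  have hsmall : ∀ᶠ t in 𝓝 (0 : ℝ), |t| ≤ t₁ ∧ a * t ^ 2 ≤ ε₁ :=
    ((continuous_abs.tendsto' 0 0 abs_zero).eventually (eventually_le_nhds ht₁)).and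
      (((by fun_prop : Continuous fun t : ℝ => a * t ^ 2).tendsto' 0 0 (by simp)).eventually
        (eventually_le_nhds hε₁))
  obtain ⟨t, ⟨ht₁', hε₁'⟩, hT, hF, ht⟩ :=
    ((eventually_nhdsWithin_of_eventually_nhds hsmall).and
      ((SD.eventually_one_le_norm_exp_sub hμ hphase).and
        (((tendsto_smoothing_div_atTop ha hs2).eventually_gt_atTop C).and
          self_mem_nhdsWithin))).exists
  have hε : 0 < a * t ^ 2 := by positivity
  rw [lt_div_iff₀ hε] at hF
  exact (hbound t _ ht₁' hε hε₁').not_gt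
    (hF.trans_le (le_mul_of_one_le_left (by positivity) hT))

/-- Assume the nondegeneracy condition `A(t) ≥ c⁎ t² I` for
`|t| ≤ t⁰`. Suppose that in the eigenvalue expansions
`λ_l(t) = γ_l t² + μ_l t³ + ν_l t⁴ + …` one has `μ_l = 0` for all `l`
(i.e. `N₀ = 0`) while `ν_j ≠ 0` for some `j` (i.e. `𝒩^{(q)} ≠ 0` for some `q`).
Let `τ ≠ 0` and `0 ≤ s < 2`. Then there is no constant `C(τ) > 0` such that
`‖e^{-iτε⁻²A(t)}P − e^{-iτε⁻²t²SP}P‖ εˢ(t²+ε²)^{-s/2} ≤ C(τ) ε` for all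
sufficiently small `|t|` and `ε`. -/
theorem exp_approx_smoothing_sharp (S : BSScheme) (SD : SpecData S)
    (cstar : ℝ) (hcstar : 0 < cstar)
    (hnondeg : ∀ t : ℝ, |t| ≤ S.t0 → ∀ u : (S.A t).domain,
      cstar * t ^ 2 * ‖(u : S.H)‖ ^ 2 ≤ (inner ℂ ((S.A t) u) (u : S.H) : ℂ).re)
    (hμ : ∀ l, SD.μ l = 0) (hν : ∃ j, SD.ν j ≠ 0)
    (τ : ℝ) (hτ : τ ≠ 0) (s : ℝ) (hs0 : 0 ≤ s) (hs2 : s < 2) :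
    ¬ ∃ C : ℝ, 0 < C ∧ ∃ t₁ > (0 : ℝ), ∃ ε₁ > (0 : ℝ), ∀ t ε : ℝ,
        |t| ≤ t₁ → 0 < ε → ε ≤ ε₁ →
        ‖(S.E t (τ / ε ^ 2)
            - NormedSpace.exp
                (((-Complex.I) * ((τ / ε ^ 2 * t ^ 2 : ℝ) : ℂ)) • S.germ))
            ∘L S.P‖ * (ε ^ s / (t ^ 2 + ε ^ 2) ^ (s / 2)) ≤ C * ε :=
  exp_approx_smoothing_sharp_general S SD hμ hν τ hτ s hs2
end
end

section
/- Assume the nondegeneracy condition A(t) ≥ c* t² I for |t| ≤ t⁰ (c* > 0). Suppose that in the analytic eigenvalue expansions λ_l(t) = γ_l t² + μ_l t³ + ν_l t⁴ + … of A(t) one has μ_l = 0 for all l (i.e., N₀ = 0), while ν_j ≠ 0 for at least one j (i.e., 𝒩^{(q)} ≠ 0 for some q). Let s ≥ 2. Then there does not exist a positive function C(τ) with lim_{τ→∞} C(τ)/|τ|^{1/2} = 0 such that ‖e^{-iτε^{-2}A(t)}P − e^{-iτε^{-2}t²SP}P‖ · ε^{s}(t²+ε²)^{-s/2} ≤ C(τ)ε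 holds for all τ ∈ ℝ and all sufficiently small |t| and ε > 0. -/
/-!
Birman–Suslina abstract operator-theoretic scheme.

`BSScheme` encodes: complex separable Hilbert spaces `H`, `Hs`; a densely defined
closed operator `X₀ : H → Hs`; a bounded operator `X₁`; the family
`X(t) = X₀ + t X₁` and the selfadjoint nonnegative operator family
`A(t) = X(t)* X(t)` (encoded through its quadratic form); the kernel
`𝔑 = Ker A(0) = Ker X₀` of finite dimension `n` with `n ≤ dim Ker X₀*`;
the orthogonal projections `P`, `P*` onto `𝔑` and `𝔑* = Ker X₀* = (Ran X₀)ᗮ`;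
the spectral gap data `0 < 8δ < d⁰` (the point `0` is isolated in the spectrum
of `A₀`); the operator `Z` (solving the weak problem `X₀*(X₀ ψ + X₁ ω) = 0`);
and the unitary group `E t τ = e^{-iτ A(t)}` generated by `A(t)`.
-/

noncomputable section

open ContinuousLinearMap

/-!
Take `ε = t` and a time `τ` of order `t⁻²`, so that the eigenvalue branch `λ_j(t)` with
`ν_j ≠ 0` is followed for the time `θ = τ/t²` with `θ t⁴ = π/|ν_j|`. Because `μ_j = 0`,
the phase `θ λ_j(t)` of `e^{-iθA(t)}` on the eigenvector `φ_j(t)` differs from the phase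
`θ t² γ_j` of the germ exponential on `ω_j` by `± π + O(t)`, so the two propagators stay
a distance `≥ 1` apart on `ω_j` while `φ_j(t) → ω_j`. The left-hand side of the estimate
is therefore bounded below by `2^{-s/2}`, whereas `C(τ) ε = C(τ) t ≍ C(τ)/τ^{1/2} → 0`.
-/

open Filter Topology Real

lemma NormedSpace.exp_apply_of_apply_eq_smul {E : Type*} [NormedAddCommGroup E]
    [NormedSpace ℂ E] [CompleteSpace E] {B : E →L[ℂ] E} {μ : ℂ} {v : E}
    (h : B v = μ • v) : NormedSpace.exp B v = Complex.exp μ • v := by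
  have hpow : ∀ n : ℕ, (B ^ n) v = μ ^ n • v := by
    intro n
    induction n with
    | zero => simp
    | succ n ih =>
      rw [pow_succ, pow_succ, mul_apply_eq_comp, h, map_smul, ih, smul_smul, mul_comm]
  have hsum : Summable fun n : ℕ => (n.factorial : ℂ)⁻¹ * μ ^ n := by
    simpa only [smul_eq_mul] using NormedSpace.expSeries_summable' (𝕂 := ℂ) μ
  calc NormedSpace.exp B v = ∑' n : ℕ, ((n.factorial : ℂ)⁻¹ • B ^ n) v := by
        rw [NormedSpace.exp_eq_tsum ℂ]
        exact (apply ℂ E v).map_tsum (NormedSpace.expSeries_summable' B)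
    _ = (∑' n : ℕ, (n.factorial : ℂ)⁻¹ * μ ^ n) • v := by
        simp only [smul_apply, hpow, smul_smul]
        exact hsum.tsum_smul_const v
    _ = Complex.exp μ • v := by
        simp only [Complex.exp_eq_exp_ℂ, NormedSpace.exp_eq_tsum ℂ, smul_eq_mul]

lemma le_norm_sub_apply_of_eigenvector_approx {𝕜 E : Type*} [NormedField 𝕜]
    [NormedAddCommGroup E] [NormedSpace 𝕜 E] {U V : E →L[𝕜] E} (hU : ∀ x, ‖U x‖ = ‖x‖)
    {f w : E} {α β : 𝕜} (hα : ‖α‖ = 1) (hf : U f = α • f) (hw : V w = β • w) :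
    ‖α - β‖ * ‖w‖ - 2 * ‖f - w‖ ≤ ‖U w - V w‖ := by
  have hsplit : U w - V w = (α - β) • w - (-(α • (f - w)) - U (w - f)) := by
    rw [hw, map_sub, hf, sub_smul, smul_sub]
    abel
  have herr : ‖-(α • (f - w)) - U (w - f)‖ ≤ 2 * ‖f - w‖ := by
    calc ‖-(α • (f - w)) - U (w - f)‖ ≤ ‖α • (f - w)‖ + ‖U (w - f)‖ := by
          simpa only [norm_neg] using norm_sub_le (-(α • (f - w))) (U (w - f))
      _ = 2 * ‖f - w‖ := by rw [norm_smul, hα, hU, norm_sub_rev w f]; ring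
  rw [hsplit]
  linarith [norm_sub_norm_le ((α - β) • w) (-(α • (f - w)) - U (w - f)),
    norm_smul (α - β) w]

lemma Complex.one_sub_cos_sub_le_norm_exp_sub_exp (a b : ℝ) :
    1 - Real.cos (a - b) ≤ ‖Complex.exp (a * I) - Complex.exp (b * I)‖ := by
  have hfactor : Complex.exp (a * I) - Complex.exp (b * I)
      = Complex.exp (b * I) * (Complex.exp ((a - b : ℝ) * I) - 1) := by
    rw [mul_sub, mul_one, ← Complex.exp_add]
    push_cast
    ring_nf
  rw [hfactor, norm_mul, Complex.norm_exp_ofReal_mul_I, one_mul]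
  calc 1 - Real.cos (a - b) = |(Complex.exp ((a - b : ℝ) * I) - 1).re| := by
        rw [Complex.sub_re, Complex.exp_ofReal_mul_I_re, Complex.one_re,
          abs_of_nonpos (by linarith [Real.cos_le_one (a - b)])]
        ring
    _ ≤ _ := Complex.abs_re_le_norm _

lemma Real.cos_add_le_neg_half {y x : ℝ} (hy : |y| = π) (hx : |x| ≤ π / 3) :
    cos (y + x) ≤ -1 / 2 := by
  have hcos : 1 / 2 ≤ cos x := by
    rw [← cos_abs, ← cos_pi_div_three]
    exact cos_le_cos_of_nonneg_of_le_pi (abs_nonneg x) (by linarith [pi_pos]) hx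
  rcases (abs_eq pi_pos.le).1 hy with rfl | rfl
  · rw [add_comm, cos_add_pi]; linarith
  · rw [add_comm, ← sub_eq_add_neg, cos_sub_pi]; linarith

lemma eventually_mul_le_nhdsGT_zero (c : ℝ) {b : ℝ} (hb : 0 < b) :
    ∀ᶠ t in 𝓝[>] (0 : ℝ), c * t ≤ b := by
  have hlim : Tendsto (fun t : ℝ => c * t) (𝓝[>] 0) (𝓝 0) := by
    simpa using ((continuous_const_mul c).tendsto 0).mono_left nhdsWithin_le_nhds
  exact (hlim.eventually_lt_const hb).mono fun _ => le_of_lt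

lemma eventually_cos_phase_le_neg_half {lam : ℝ → ℝ} {γ ν c t₀ : ℝ} (hν : ν ≠ 0)
    (hlam : ∀ t, 0 < t → t ≤ t₀ → |lam t - (γ * t ^ 2 + ν * t ^ 4)| ≤ c * t ^ 5)
    (ht₀ : 0 < t₀) :
    ∀ᶠ t in 𝓝[>] (0 : ℝ), ∀ θ : ℝ, θ * t ^ 4 = π / |ν| →
      cos (θ * lam t - θ * t ^ 2 * γ) ≤ -1 / 2 := by
  have hκ : 0 < π / |ν| := div_pos pi_pos (abs_pos.mpr hν)
  filter_upwards [eventually_mul_le_nhdsGT_zero (π / |ν| * c) (by positivity : 0 < π / 3),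
    Ioo_mem_nhdsGT ht₀] with t hsmall ht θ hθ
  have hθ_nonneg : 0 ≤ θ := by
    by_contra! hneg
    nlinarith [pow_pos ht.1 4]
  set x := θ * (lam t - (γ * t ^ 2 + ν * t ^ 4))
  have hx : |x| ≤ π / 3 :=
    calc |x| = θ * |lam t - (γ * t ^ 2 + ν * t ^ 4)| := by rw [abs_mul, abs_of_nonneg hθ_nonneg]
      _ ≤ θ * (c * t ^ 5) := mul_le_mul_of_nonneg_left (hlam t ht.1 ht.2.le) hθ_nonneg
      _ = π / |ν| * c * t := by rw [← hθ]; ring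
      _ ≤ π / 3 := hsmall
  have hy : |ν * (π / |ν|)| = π := by
    rw [abs_mul, abs_of_pos hκ]
    field_simp
  have hphase : θ * lam t - θ * t ^ 2 * γ = ν * (π / |ν|) + x := by
    rw [← hθ]
    ring
  rw [hphase]
  exact cos_add_le_neg_half hy hx

lemma BSScheme.E_apply_of_eigenvector (S : BSScheme) {t lam : ℝ} {φ : S.H}
    (hd : φ ∈ (S.A t).domain) (heig : (S.A t) ⟨φ, hd⟩ = (lam : ℂ) • φ) (θ : ℝ) :
    S.E t θ φ = Complex.exp ((-(lam * θ) : ℝ) * Complex.I) • φ := by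
  set c : ℂ := Complex.I * lam
  have hderiv : ∀ σ : ℝ,
      HasDerivAt (fun σ : ℝ => Complex.exp (c * σ) • S.E t σ φ) 0 σ := by
    intro σ
    have hE := S.E_gen t σ ⟨φ, hd⟩
    rw [heig, map_smul] at hE
    have hphase : HasDerivAt (fun σ : ℝ => c * (σ : ℂ)) c σ := by
      simpa using (Complex.ofRealCLM.hasDerivAt (x := σ)).const_mul c
    refine (hphase.cexp.smul hE).congr_deriv ?_
    simp only [c, smul_neg, smul_smul, mul_assoc]
    exact neg_add_cancel _
  have hconst : Complex.exp (c * θ) • S.E t θ φ = φ := by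
    simpa [S.E_zero t] using is_const_of_deriv_eq_zero
      (fun σ => (hderiv σ).differentiableAt) (fun σ => (hderiv σ).deriv) θ 0
  calc S.E t θ φ = Complex.exp (-(c * θ)) • Complex.exp (c * θ) • S.E t θ φ := by
        rw [smul_smul, ← Complex.exp_add, neg_add_cancel, Complex.exp_zero, one_smul]
    _ = Complex.exp ((-(lam * θ) : ℝ) * Complex.I) • φ := by
        rw [hconst]
        simp only [c]
        push_cast
        ring_nf

theorem SpecData.eventually_one_le_norm_E_sub_exp_germ_comp_P {S : BSScheme} (SD : SpecData S)
    {j : Fin S.n} (hμ : SD.μ j = 0) (hν : SD.ν j ≠ 0) :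
    ∀ᶠ t in 𝓝[>] (0 : ℝ), ∀ θ : ℝ, θ * t ^ 4 = π / |SD.ν j| →
      1 ≤ ‖(S.E t θ - NormedSpace.exp (((-Complex.I) * ((θ * t ^ 2 : ℝ) : ℂ)) • S.germ))
        ∘L S.P‖ := by
  obtain ⟨cφ, hφ⟩ := SD.φ_expansion
  obtain ⟨clam, hlam⟩ := SD.lam_expansion
  have hlam' : ∀ t, 0 < t → t ≤ SD.tstar →
      |SD.lam j t - (SD.γ j * t ^ 2 + SD.ν j * t ^ 4)| ≤ clam * t ^ 5 := fun t ht htle => by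
    simpa [hμ, abs_of_pos ht] using hlam j t (by rwa [abs_of_pos ht])
  filter_upwards [eventually_cos_phase_le_neg_half hν hlam' SD.tstar_pos,
    eventually_mul_le_nhdsGT_zero cφ (by norm_num : (0 : ℝ) < 1 / 4),
    Ioo_mem_nhdsGT SD.tstar_pos] with t hcos hφsmall ht θ hθ
  have htstar : |t| ≤ SD.tstar := by rw [abs_of_pos ht.1]; exact ht.2.le
  obtain ⟨hd, heig⟩ := SD.φ_eig j t htstar
  have hgerm : (((-Complex.I) * ((θ * t ^ 2 : ℝ) : ℂ)) • S.germ) (SD.ω j)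
      = ((-(θ * t ^ 2 * SD.γ j) : ℝ) * Complex.I) • SD.ω j := by
    rw [smul_apply, SD.germ_eig, smul_smul]
    push_cast
    ring_nf
  have hωnorm : ‖SD.ω j‖ = 1 := SD.ω_orthonormal.1 j
  have hφω : ‖SD.φ j t - SD.ω j‖ ≤ 1 / 4 := by
    have := hφ j t htstar
    rw [abs_of_pos ht.1] at this
    linarith
  set T := (S.E t θ - NormedSpace.exp (((-Complex.I) * ((θ * t ^ 2 : ℝ) : ℂ)) • S.germ))
    ∘L S.P
  have hphase : 3 / 2 ≤ 1 - cos (-(SD.lam j t * θ) - -(θ * t ^ 2 * SD.γ j)) := by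
    rw [show -(SD.lam j t * θ) - -(θ * t ^ 2 * SD.γ j)
        = -(θ * SD.lam j t - θ * t ^ 2 * SD.γ j) by ring, cos_neg]
    linarith [hcos θ hθ]
  calc (1 : ℝ) ≤ (1 - cos (-(SD.lam j t * θ) - -(θ * t ^ 2 * SD.γ j))) * ‖SD.ω j‖
        - 2 * ‖SD.φ j t - SD.ω j‖ := by rw [hωnorm]; linarith
    _ ≤ ‖Complex.exp ((-(SD.lam j t * θ) : ℝ) * Complex.I)
          - Complex.exp ((-(θ * t ^ 2 * SD.γ j) : ℝ) * Complex.I)‖ * ‖SD.ω j‖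
        - 2 * ‖SD.φ j t - SD.ω j‖ := by
        gcongr
        exact Complex.one_sub_cos_sub_le_norm_exp_sub_exp _ _
    _ ≤ ‖T (SD.ω j)‖ := by
        rw [show T (SD.ω j) = S.E t θ (SD.ω j) - NormedSpace.exp
            (((-Complex.I) * ((θ * t ^ 2 : ℝ) : ℂ)) • S.germ) (SD.ω j) by
          simp only [T, comp_apply, S.P_fix _ (SD.ω_mem j), sub_apply]]
        exact le_norm_sub_apply_of_eigenvector_approx (S.E_isometry t θ)
          (Complex.norm_exp_ofReal_mul_I _) (S.E_apply_of_eigenvector hd heig θ)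
          (NormedSpace.exp_apply_of_apply_eq_smul hgerm)
    _ ≤ ‖T‖ := by simpa [hωnorm] using T.le_opNorm (SD.ω j)

lemma rpow_div_sq_add_sq_self {t : ℝ} (ht : 0 < t) (s : ℝ) :
    t ^ s / (t ^ 2 + t ^ 2) ^ (s / 2) = ((2 : ℝ) ^ (s / 2))⁻¹ := by
  have hsq : (t ^ 2) ^ (s / 2) = t ^ s := by
    rw [← rpow_natCast, ← rpow_mul ht.le]
    ring_nf
  rw [← two_mul, mul_rpow zero_le_two (sq_nonneg t), hsq]
  field_simp [(rpow_pos_of_pos ht s).ne']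

lemma tendsto_comp_div_sq_mul_nhdsGT_zero {C : ℝ → ℝ} {κ : ℝ} (hκ : 0 < κ)
    (hC : Tendsto (fun τ => C τ / √|τ|) atTop (𝓝 0)) :
    Tendsto (fun t => C (κ / t ^ 2) * t) (𝓝[>] 0) (𝓝 0) := by
  have hτ : Tendsto (fun t : ℝ => κ / t ^ 2) (𝓝[>] 0) atTop :=
    (((tendsto_pow_atTop two_ne_zero).comp tendsto_inv_nhdsGT_zero).const_mul_atTop hκ).congr
      fun t => by simp [div_eq_mul_inv]
  have hlim := (hC.comp hτ).const_mul (√κ)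
  rw [mul_zero] at hlim
  refine hlim.congr' ?_
  filter_upwards [self_mem_nhdsWithin] with t (ht : 0 < t)
  rw [Function.comp_apply, abs_of_pos (by positivity), sqrt_div' κ (sq_nonneg t), sqrt_sq ht.le]
  field_simp [(sqrt_pos.mpr hκ).ne']

theorem exp_approx_time_sharp_enhanced_general (S : BSScheme) (SD : SpecData S)
    (hμ : ∀ l, SD.μ l = 0) (hν : ∃ j, SD.ν j ≠ 0)
    (s : ℝ) :
    ¬ ∃ C : ℝ → ℝ, (∀ τ, 0 < C τ) ∧
        Filter.Tendsto (fun τ : ℝ => C τ / Real.sqrt |τ|) Filter.atTop (nhds 0) ∧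
        ∃ t₁ > (0 : ℝ), ∃ ε₁ > (0 : ℝ), ∀ τ t ε : ℝ,
          |t| ≤ t₁ → 0 < ε → ε ≤ ε₁ →
          ‖(S.E t (τ / ε ^ 2)
              - NormedSpace.exp
                  (((-Complex.I) * ((τ / ε ^ 2 * t ^ 2 : ℝ) : ℂ)) • S.germ))
              ∘L S.P‖ * (ε ^ s / (t ^ 2 + ε ^ 2) ^ (s / 2)) ≤ C τ * ε := by
  rintro ⟨C, -, hC, t₁, ht₁, ε₁, hε₁, hbound⟩
  obtain ⟨j, hνj⟩ := hν
  set κ := π / |SD.ν j|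
  have hκ : 0 < κ := div_pos pi_pos (abs_pos.mpr hνj)
  have hlow : 0 < ((2 : ℝ) ^ (s / 2))⁻¹ := by positivity
  obtain ⟨t, hCsmall, hsharp, ht, htmin⟩ :=
    (((tendsto_comp_div_sq_mul_nhdsGT_zero hκ hC).eventually_lt_const hlow).and
      ((SD.eventually_one_le_norm_E_sub_exp_germ_comp_P (hμ j) hνj).and
        (Ioo_mem_nhdsGT (lt_min ht₁ hε₁)))).exists
  obtain ⟨htt₁, htε₁⟩ := lt_min_iff.1 htmin
  have hθ : κ / t ^ 2 / t ^ 2 * t ^ 4 = κ := by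
    have := ht.ne'
    field_simp
  have hbd := hbound (κ / t ^ 2) t t (by rw [abs_of_pos ht]; exact htt₁.le) ht htε₁.le
  rw [rpow_div_sq_add_sq_self ht] at hbd
  nlinarith [hsharp _ hθ]

/-- Assume the nondegeneracy condition `A(t) ≥ c⁎ t² I` for
`|t| ≤ t⁰`. Suppose that in the eigenvalue expansions
`λ_l(t) = γ_l t² + μ_l t³ + ν_l t⁴ + …` one has `μ_l = 0` for all `l`
(i.e. `N₀ = 0`) while `ν_j ≠ 0` for some `j` (i.e. `𝒩^{(q)} ≠ 0` for some `q`).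
Let `s ≥ 2`. Then there is no positive function `C(τ)` with
`lim_{τ→∞} C(τ)/|τ|^{1/2} = 0` such that
`‖e^{-iτε⁻²A(t)}P − e^{-iτε⁻²t²SP}P‖ εˢ(t²+ε²)^{-s/2} ≤ C(τ) ε` for all
`τ ∈ ℝ` and all sufficiently small `|t|` and `ε > 0`. -/
theorem exp_approx_time_sharp_enhanced (S : BSScheme) (SD : SpecData S)
    (cstar : ℝ) (hcstar : 0 < cstar)
    (hnondeg : ∀ t : ℝ, |t| ≤ S.t0 → ∀ u : (S.A t).domain,
      cstar * t ^ 2 * ‖(u : S.H)‖ ^ 2 ≤ (inner ℂ ((S.A t) u) (u : S.H) : ℂ).re)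
    (hμ : ∀ l, SD.μ l = 0) (hν : ∃ j, SD.ν j ≠ 0)
    (s : ℝ) (hs : 2 ≤ s) :
    ¬ ∃ C : ℝ → ℝ, (∀ τ, 0 < C τ) ∧
        Filter.Tendsto (fun τ : ℝ => C τ / Real.sqrt |τ|) Filter.atTop (nhds 0) ∧
        ∃ t₁ > (0 : ℝ), ∃ ε₁ > (0 : ℝ), ∀ τ t ε : ℝ,
          |t| ≤ t₁ → 0 < ε → ε ≤ ε₁ →
          ‖(S.E t (τ / ε ^ 2)
              - NormedSpace.exp
                  (((-Complex.I) * ((τ / ε ^ 2 * t ^ 2 : ℝ) : ℂ)) • S.germ))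
              ∘L S.P‖ * (ε ^ s / (t ^ 2 + ε ^ 2) ^ (s / 2)) ≤ C τ * ε :=
  exp_approx_time_sharp_enhanced_general S SD hμ hν s
end
end

section
/- Suppose N̂_{0,Q} ≠ 0. Let s ≥ 3. Then there does not exist a positive function C(τ) with lim_{τ→∞} C(τ)/|τ| = 0 such that ‖M e^{-iτε^{-2}A(t)} M^{-1} P̂ − M₀ e^{-iτε^{-2}t²M₀ŜM₀} M₀^{-1} P̂‖ · ε^{s}(t²+ε²)^{-s/2} ≤ C(τ)ε holds for all τ ∈ ℝ and all sufficiently small |t| and ε > 0. -/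
/-!
Birman–Suslina abstract operator-theoretic scheme.

`BSScheme` encodes: complex separable Hilbert spaces `H`, `Hs`; a densely defined
closed operator `X₀ : H → Hs`; a bounded operator `X₁`; the family
`X(t) = X₀ + t X₁` and the selfadjoint nonnegative operator family
`A(t) = X(t)* X(t)` (encoded through its quadratic form); the kernel
`𝔑 = Ker A(0) = Ker X₀` of finite dimension `n` with `n ≤ dim Ker X₀*`;
the orthogonal projections `P`, `P*` onto `𝔑` and `𝔑* = Ker X₀* = (Ran X₀)ᗮ`;
the spectral gap data `0 < 8δ < d⁰` (the point `0` is isolated in the spectrum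
of `A₀`); the operator `Z` (solving the weak problem `X₀*(X₀ ψ + X₁ ω) = 0`);
and the unitary group `E t τ = e^{-iτ A(t)}` generated by `A(t)`.
-/

noncomputable section

open ContinuousLinearMap

/-! The sandwiched scheme: a second family `Â(t) = X̂(t)* X̂(t)` in a Hilbert
space `Ĥ`, together with an isomorphism `M : H → Ĥ` with `M Dom X₀ = Dom X̂₀`
and `X(t) = X̂(t) M`, so that `A(t) = M* Â(t) M`.  `𝔑̂ = Ker Â₀ = M 𝔑` with
orthogonal projection `P̂`; `Ŝ` is the spectral germ of `Â(t)`;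
`Q = (M M*)⁻¹`; `M₀ = (Q_𝔑̂)^{-1/2}` (encoded by the relations
`P̂ Q M₀² P̂ = P̂` on `𝔑̂`, `M₀` selfadjoint, nonnegative, commuting with `P̂`,
with inverse `M₀⁻¹` on `𝔑̂`). -/
structure SandScheme extends BSScheme where
  Hh : Type
  [instHh₁ : NormedAddCommGroup Hh]
  [instHh₂ : InnerProductSpace ℂ Hh]
  [instHh₃ : CompleteSpace Hh]
  /-- densely defined closed operator `X̂₀` -/
  Xh₀ : Hh →ₗ.[ℂ] Hs
  Xh₀_dense : Dense (Xh₀.domain : Set Hh)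
  Xh₀_closed : IsClosed (Xh₀.graph : Set (Hh × Hs))
  /-- bounded operator `X̂₁` -/
  Xh₁ : Hh →L[ℂ] Hs
  /-- the isomorphism `M : H → Ĥ` -/
  Mm : H ≃L[ℂ] Hh
  dom_eq : ∀ u : H, u ∈ X₀.domain ↔ Mm u ∈ Xh₀.domain
  X₀_sand : ∀ u : X₀.domain, X₀ u = Xh₀ ⟨Mm u, (dom_eq u).1 u.2⟩
  X₁_sand : ∀ u : H, X₁ u = Xh₁ (Mm u)
  /-- `𝔑̂ = Ker X̂₀ = Ker Â₀` -/
  kerHat : Submodule ℂ Hh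
  kerHat_def : ∀ u : Hh, u ∈ kerHat ↔ ∃ hu : u ∈ Xh₀.domain, Xh₀ ⟨u, hu⟩ = 0
  /-- the orthogonal projection `P̂` onto `𝔑̂` -/
  Ph : Hh →L[ℂ] Hh
  Ph_mem : ∀ u, Ph u ∈ kerHat
  Ph_fix : ∀ u ∈ kerHat, Ph u = u
  Ph_sa : IsSelfAdjoint Ph
  /-- `M₀ = (Q_𝔑̂)^{-1/2}`, where `Q_𝔑̂ = P̂ Q|_𝔑̂` and `Q = (M M*)⁻¹` -/
  M₀ : Hh →L[ℂ] Hh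
  M₀inv : Hh →L[ℂ] Hh
  M₀_sa : IsSelfAdjoint M₀
  M₀_nonneg : ∀ u : Hh, 0 ≤ (inner ℂ (M₀ u) u : ℂ).re
  M₀_comm : M₀ ∘L Ph = Ph ∘L M₀
  M₀inv_comm : M₀inv ∘L Ph = Ph ∘L M₀inv
  M₀_sq : ∀ u : Hh,
    Ph ((ContinuousLinearMap.adjoint ((Mm.symm : Hh →L[ℂ] H)))
      ((Mm.symm : Hh →L[ℂ] H) (M₀ (M₀ (Ph u))))) = Ph u
  M₀_inv_left : ∀ u : Hh, M₀ (M₀inv (Ph u)) = Ph u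
  M₀_inv_right : ∀ u : Hh, M₀inv (M₀ (Ph u)) = Ph u

attribute [instance] SandScheme.instHh₁ SandScheme.instHh₂ SandScheme.instHh₃

namespace SandScheme

variable (S : SandScheme)

/-- `M` as a bounded operator -/
def Mcl : S.H →L[ℂ] S.Hh := (S.Mm : S.H →L[ℂ] S.Hh)

/-- `M⁻¹` as a bounded operator -/
def Minv : S.Hh →L[ℂ] S.H := (S.Mm.symm : S.Hh →L[ℂ] S.H)

/-- the spectral germ `Ŝ` of `Â(t)` (extended by zero, i.e. the operator `Ŝ P̂`);
here `P̂* = P*` is the orthogonal projection onto `𝔑̂* = 𝔑* = Ker X̂₀*` -/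
def germHat : S.Hh →L[ℂ] S.Hh :=
  S.Ph ∘L (ContinuousLinearMap.adjoint S.Xh₁) ∘L S.Pstar ∘L S.Xh₁ ∘L S.Ph

/-- the operator `N̂_Q = P̂ (M*)⁻¹ N M⁻¹ P̂` -/
def NhatQ : S.Hh →L[ℂ] S.Hh :=
  S.Ph ∘L (ContinuousLinearMap.adjoint S.Minv) ∘L S.Nop ∘L S.Minv ∘L S.Ph

end SandScheme

/-- the operator `N̂_{0,Q} = P̂ (M*)⁻¹ N₀ M⁻¹ P̂` -/
noncomputable def SandScheme.NhatQ0 (S : SandScheme) (SD : SpecData S.toBSScheme) :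
    S.Hh →L[ℂ] S.Hh :=
  S.Ph ∘L (ContinuousLinearMap.adjoint S.Minv) ∘L SD.N0op ∘L S.Minv ∘L S.Ph

/-!
Take `ε = |t|`. Then the model evolution `W_τ = M₀ e^{-iτ M₀ŜM₀} M₀⁻¹` no longer depends on `t`,
while on `v = M ω_j` the true evolution `M e^{-iτt⁻²A(t)} M⁻¹` is, up to `O(t)`, multiplication by
the phase `e^{-iτλ_j(t)/t²}`. So the phases at `t` and at `-t` both carry `v` to within
`o(τ)|t|` of `W_τ v`. They differ by `2μ_j τ t + O(τ t³)`, and for `t = -π/(2μ_j τ)` this is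
close to `π`; hence `‖v‖ ≤ o(τ)/τ`, which is impossible for large `τ` once `μ_j ≠ 0`.
-/

open Filter Topology Complex

theorem eq_exp_smul_of_hasDerivAt {V : Type*} [NormedAddCommGroup V] [NormedSpace ℂ V]
    {f : ℝ → V} {a : ℂ} (hf : ∀ s, HasDerivAt f (a • f s) s) (σ : ℝ) :
    f σ = exp (σ * a) • f 0 := by
  set g : ℝ → V := fun s => exp (-(s * a)) • f s
  have hg : ∀ s, HasDerivAt g 0 s := by
    intro s
    have he : HasDerivAt (fun s : ℝ => exp (-(s * a))) (exp (-(s * a)) * -a) s := by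
      simpa using ((hasDerivAt_id (s : ℂ)).mul_const a).neg.cexp.comp_ofReal
    refine (he.smul (hf s)).congr_deriv ?_
    rw [smul_smul, ← add_smul, mul_neg, add_neg_cancel, zero_smul]
  have hconst : g σ = g 0 := is_const_of_deriv_eq_zero (fun s => (hg s).differentiableAt)
    (fun s => (hg s).deriv) σ 0
  simp only [g, ofReal_zero, zero_mul, neg_zero, exp_zero, one_smul] at hconst
  rw [← hconst, smul_smul, ← exp_add, add_neg_cancel, exp_zero, one_smul]

theorem BSScheme.E_apply_of_eigen_s7 (S : BSScheme) {t lam : ℝ} {φ : S.H}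
    (hd : φ ∈ (S.A t).domain) (h : S.A t ⟨φ, hd⟩ = (lam : ℂ) • φ) (σ : ℝ) :
    S.E t σ φ = exp (↑(-(σ * lam)) * I) • φ := by
  have hf : ∀ s, HasDerivAt (fun s => S.E t s φ) ((-(lam * I)) • S.E t s φ) s := by
    intro s
    convert S.E_gen t s ⟨φ, hd⟩ using 1
    rw [h, map_smul, smul_smul, neg_smul, mul_comm]
  rw [eq_exp_smul_of_hasDerivAt hf σ, S.E_zero, id_apply]
  congr 2
  push_cast
  ring

theorem norm_apply_sub_smul_le_of_eigen {𝕜 V : Type*} [NormedField 𝕜] [SeminormedAddCommGroup V]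
    [NormedSpace 𝕜 V] (T : V →L[𝕜] V) (hT : ∀ x, ‖T x‖ = ‖x‖) {z : 𝕜} (hz : ‖z‖ = 1)
    {φ : V} (hφ : T φ = z • φ) (ω : V) : ‖T ω - z • ω‖ ≤ 2 * ‖ω - φ‖ := by
  have h : T ω - z • ω = T (ω - φ) + z • (φ - ω) := by
    rw [map_sub, hφ, smul_sub]; abel
  calc ‖T ω - z • ω‖ ≤ ‖T (ω - φ)‖ + ‖z • (φ - ω)‖ := h ▸ norm_add_le _ _
    _ = 2 * ‖ω - φ‖ := by rw [hT, norm_smul, hz, one_mul, norm_sub_rev]; ring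

theorem one_le_norm_exp_mul_I_sub_exp_mul_I {a b : ℝ} (h : Real.cos (a - b) ≤ 0) :
    1 ≤ ‖exp (a * I) - exp (b * I)‖ := by
  have hfactor : exp (a * I) - exp (b * I) = exp (b * I) * (exp (↑(a - b) * I) - 1) := by
    rw [mul_sub, ← exp_add, mul_one]; push_cast; ring_nf
  have hsq : ‖exp (↑(a - b) * I) - 1‖ ^ 2 = 2 - 2 * Real.cos (a - b) := by
    rw [Complex.sq_norm, Complex.normSq_apply]
    simp only [sub_re, sub_im, exp_ofReal_mul_I_re, exp_ofReal_mul_I_im, one_re, one_im]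
    nlinarith [Real.sin_sq_add_cos_sq (a - b)]
  rw [hfactor, norm_mul, norm_exp_ofReal_mul_I, one_mul]
  nlinarith [norm_nonneg (exp (↑(a - b) * I) - 1)]

theorem abs_odd_phase_sub_le {lam : ℝ → ℝ} {γ μ ν c τ t : ℝ} (hτ : 0 ≤ τ) (ht : t ≠ 0)
    (hpos : |lam t - (γ * t ^ 2 + μ * t ^ 3 + ν * t ^ 4)| ≤ c * |t| ^ 5)
    (hneg : |lam (-t) - (γ * (-t) ^ 2 + μ * (-t) ^ 3 + ν * (-t) ^ 4)| ≤ c * |-t| ^ 5) :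
    |-(τ / |t| ^ 2 * lam t) - -(τ / |-t| ^ 2 * lam (-t)) + 2 * μ * τ * t|
      ≤ 2 * c * τ * |t| ^ 3 := by
  have hodd : |lam t - lam (-t) - 2 * μ * t ^ 3| ≤ 2 * c * |t| ^ 5 := by
    rw [abs_neg] at hneg
    rw [abs_le] at hpos hneg ⊢
    constructor <;> nlinarith [hpos.1, hpos.2, hneg.1, hneg.2]
  have hτt : 0 ≤ τ / |t| ^ 2 := by positivity
  have hexpr : -(τ / |t| ^ 2 * lam t) - -(τ / |-t| ^ 2 * lam (-t)) + 2 * μ * τ * t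
      = -(τ / |t| ^ 2 * (lam t - lam (-t) - 2 * μ * t ^ 3)) := by
    rw [abs_neg, sq_abs]
    field_simp
    ring
  calc |-(τ / |t| ^ 2 * lam t) - -(τ / |-t| ^ 2 * lam (-t)) + 2 * μ * τ * t|
      = τ / |t| ^ 2 * |lam t - lam (-t) - 2 * μ * t ^ 3| := by
        rw [hexpr, abs_neg, abs_mul, abs_of_nonneg hτt]
    _ ≤ τ / |t| ^ 2 * (2 * c * |t| ^ 5) := by gcongr
    _ = 2 * c * τ * |t| ^ 3 := by field_simp

open Real in
theorem eq_zero_of_phase_split_approx {V : Type*} [NormedAddCommGroup V] [NormedSpace ℂ V]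
    {v : V} {μ c r : ℝ} (hμ : μ ≠ 0) (hr : 0 < r) {K : ℝ → ℝ}
    (hK : Tendsto (fun τ => K τ / τ) atTop (𝓝 0)) {θ : ℝ → ℝ → ℝ} {w : ℝ → V}
    (happrox : ∀ τ t, t ≠ 0 → |t| ≤ r → ‖exp (θ τ t * I) • v - w τ‖ ≤ K τ * |t|)
    (hphase : ∀ τ t, 0 < τ → t ≠ 0 → |t| ≤ r →
      |θ τ t - θ τ (-t) + 2 * μ * τ * t| ≤ c * τ * |t| ^ 3) :
    v = 0 := by
  by_contra hv
  have hvpos : 0 < ‖v‖ := norm_pos_iff.2 hv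
  set a := π / (2 * |μ|) with ha
  have hapos : 0 < a := by positivity
  have hρ : Tendsto (fun τ => a / τ) atTop (𝓝 0) := tendsto_const_nhds.div_atTop tendsto_id
  have hdrift : Tendsto (fun τ => c * a * (a / τ) ^ 2) atTop (𝓝 0) := by
    simpa using (hρ.pow 2).const_mul (c * a)
  have hK' : Tendsto (fun τ => 2 * a * (K τ / τ)) atTop (𝓝 0) := by
    simpa using hK.const_mul (2 * a)
  obtain ⟨τ, hτ, hρr, hdriftτ, hKτ⟩ := ((eventually_gt_atTop 0).and
    ((hρ.eventually_le_const hr).and ((hdrift.eventually_le_const (by positivity : 0 < π / 2)).and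
      (hK'.eventually_lt_const hvpos)))).exists
  -- The test time `t` makes the leading phase drift `2 μ τ t` equal to `-π`.
  set t := -(π / (2 * μ * τ)) with htdef
  have habst : |t| = a / τ := by
    rw [htdef, abs_neg, abs_div, abs_mul, abs_mul, abs_two, abs_of_pos pi_pos, abs_of_pos hτ, ha,
      div_div]
  have ht0 : t ≠ 0 := by
    rw [htdef, neg_ne_zero]
    exact div_ne_zero pi_ne_zero (by positivity)
  have hrt : |t| ≤ r := habst ▸ hρr
  have hcos : Real.cos (θ τ t - θ τ (-t)) ≤ 0 := by
    have hπ : 2 * μ * τ * t = -π := by rw [htdef]; field_simp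
    have h := (hphase τ t hτ ht0 hrt).trans_eq (show c * τ * |t| ^ 3 = c * a * (a / τ) ^ 2 by
      rw [habst]; field_simp)
    rw [hπ, ← sub_eq_add_neg, abs_le] at h
    exact cos_nonpos_of_pi_div_two_le_of_le (by linarith) (by linarith)
  have hlower : ‖v‖ ≤ ‖(exp (θ τ t * I) - exp (θ τ (-t) * I)) • v‖ := by
    rw [norm_smul]
    exact le_mul_of_one_le_left (norm_nonneg v) (one_le_norm_exp_mul_I_sub_exp_mul_I hcos)
  have hupper : ‖(exp (θ τ t * I) - exp (θ τ (-t) * I)) • v‖ ≤ 2 * a * (K τ / τ) := by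
    have hsplit : (exp (θ τ t * I) - exp (θ τ (-t) * I)) • v
        = (exp (θ τ t * I) • v - w τ) - (exp (θ τ (-t) * I) • v - w τ) := by
      rw [sub_smul]; abel
    have hmt := happrox τ (-t) (neg_ne_zero.2 ht0) (by rwa [abs_neg])
    rw [abs_neg] at hmt
    calc _ ≤ K τ * |t| + K τ * |t| := hsplit ▸ (norm_sub_le _ _).trans
          (add_le_add (happrox τ t ht0 hrt) hmt)
      _ = 2 * a * (K τ / τ) := by rw [habst]; ring
  linarith

theorem rpow_abs_div_sq_add_sq_abs_rpow {t : ℝ} (ht : t ≠ 0) (s : ℝ) :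
    |t| ^ s / (t ^ 2 + |t| ^ 2) ^ (s / 2) = ((2 : ℝ) ^ (s / 2))⁻¹ := by
  have hts : (0 : ℝ) < |t| ^ s := Real.rpow_pos_of_pos (abs_pos.2 ht) s
  rw [← sq_abs t, ← two_mul, Real.mul_rpow zero_le_two (sq_nonneg _), ← Real.rpow_natCast,
    ← Real.rpow_mul (abs_nonneg t), Nat.cast_ofNat, mul_div_cancel₀ s two_ne_zero,
    div_mul_eq_div_div_swap, div_self hts.ne', one_div]

theorem tendsto_affine_div_atTop_zero {C : ℝ → ℝ} (hC : Tendsto (fun τ => C τ / |τ|) atTop (𝓝 0))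
    (a b : ℝ) : Tendsto (fun τ => (a * C τ + b) / τ) atTop (𝓝 0) := by
  have h := (hC.const_mul a).add (tendsto_const_nhds (x := b).div_atTop tendsto_id)
  rw [mul_zero, zero_add] at h
  refine h.congr' ?_
  filter_upwards [eventually_gt_atTop 0] with τ hτ
  rw [abs_of_pos hτ, id, add_div, mul_div_assoc]

namespace SandScheme

variable (S : SandScheme)

theorem exists_μ_ne_zero_of_NhatQ0_ne_zero (SD : SpecData S.toBSScheme) (h : S.NhatQ0 SD ≠ 0) :
    ∃ j, SD.μ j ≠ 0 := by
  by_contra! hμ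
  apply h
  have hN0 : SD.N0op = 0 := by simp [SpecData.N0op, hμ]
  simp [NhatQ0, hN0]

theorem Minv_Mcl (u : S.H) : S.Minv (S.Mcl u) = u := by
  simp [Minv, Mcl]

theorem Mcl_ne_zero {u : S.H} (hu : u ≠ 0) : S.Mcl u ≠ 0 := by
  simpa [Mcl] using hu

theorem Mcl_mem_kerHat {u : S.H} (hu : u ∈ S.ker) : S.Mcl u ∈ S.kerHat := by
  obtain ⟨hdom, hX₀u⟩ := (S.ker_def u).1 hu
  exact (S.kerHat_def _).2 ⟨(S.dom_eq u).1 hdom, (S.X₀_sand ⟨u, hdom⟩).symm.trans hX₀u⟩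

theorem norm_exp_smul_Mcl_sub_le (W : S.Hh →L[ℂ] S.Hh) {t lam : ℝ} {φ ω : S.H}
    (hd : φ ∈ (S.A t).domain) (h : S.A t ⟨φ, hd⟩ = (lam : ℂ) • φ) (hω : ω ∈ S.ker) (σ : ℝ) :
    ‖exp (↑(-(σ * lam)) * I) • S.Mcl ω - W (S.Mcl ω)‖
      ≤ ‖(S.Mcl ∘L S.E t σ ∘L S.Minv - W) ∘L S.Ph‖ * ‖S.Mcl ω‖ + ‖S.Mcl‖ * (2 * ‖ω - φ‖) := by
  set z := exp (↑(-(σ * lam)) * I)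
  have happly : ((S.Mcl ∘L S.E t σ ∘L S.Minv - W) ∘L S.Ph) (S.Mcl ω)
      = S.Mcl (S.E t σ ω) - W (S.Mcl ω) := by
    simp [S.Ph_fix _ (S.Mcl_mem_kerHat hω), Minv_Mcl]
  have heig : ‖S.E t σ ω - z • ω‖ ≤ 2 * ‖ω - φ‖ :=
    norm_apply_sub_smul_le_of_eigen _ (S.E_isometry t σ) (norm_exp_ofReal_mul_I _)
      (S.toBSScheme.E_apply_of_eigen_s7 hd h σ) ω
  calc ‖z • S.Mcl ω - W (S.Mcl ω)‖
      = ‖(S.Mcl (S.E t σ ω) - W (S.Mcl ω)) - S.Mcl (S.E t σ ω - z • ω)‖ := by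
        rw [map_sub, map_smul]; congr 1; abel
    _ ≤ ‖S.Mcl (S.E t σ ω) - W (S.Mcl ω)‖ + ‖S.Mcl (S.E t σ ω - z • ω)‖ := norm_sub_le _ _
    _ ≤ _ := add_le_add (happly ▸ le_opNorm _ _) ((le_opNorm _ _).trans (by gcongr))

end SandScheme

theorem sandwiched_exp_time_sharp_general_general (S : SandScheme) (SD : SpecData S.toBSScheme)
    (hN0Q : S.NhatQ0 SD ≠ 0) (s : ℝ) :
    ¬ ∃ C : ℝ → ℝ, (∀ τ, 0 < C τ) ∧
        Filter.Tendsto (fun τ : ℝ => C τ / |τ|) Filter.atTop (nhds 0) ∧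
        ∃ t₁ > (0 : ℝ), ∃ ε₁ > (0 : ℝ), ∀ τ t ε : ℝ,
          |t| ≤ t₁ → 0 < ε → ε ≤ ε₁ →
          ‖(S.Mcl ∘L S.E t (τ / ε ^ 2) ∘L S.Minv
              - S.M₀ ∘L NormedSpace.exp
                  (((-Complex.I) * ((τ / ε ^ 2 * t ^ 2 : ℝ) : ℂ))
                    • (S.M₀ ∘L S.germHat ∘L S.M₀)) ∘L S.M₀inv)
              ∘L S.Ph‖ * (ε ^ s / (t ^ 2 + ε ^ 2) ^ (s / 2)) ≤ C τ * ε := by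
  rintro ⟨C, -, hClim, t₁, ht₁, ε₁, hε₁, hbound⟩
  obtain ⟨j, hμ⟩ := S.exists_μ_ne_zero_of_NhatQ0_ne_zero SD hN0Q
  obtain ⟨c, hc⟩ := SD.φ_expansion
  obtain ⟨c', hc'⟩ := SD.lam_expansion
  set v := S.Mcl (SD.ω j)
  set W : ℝ → S.Hh →L[ℂ] S.Hh := fun τ => S.M₀ ∘L NormedSpace.exp
    ((-I * ((τ : ℝ) : ℂ)) • (S.M₀ ∘L S.germHat ∘L S.M₀)) ∘L S.M₀inv
  have hr : ∀ t : ℝ, |t| ≤ min (min t₁ ε₁) SD.tstar → |t| ≤ t₁ ∧ |t| ≤ ε₁ ∧ |t| ≤ SD.tstar := by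
    simp only [le_min_iff]; tauto
  refine S.Mcl_ne_zero (SD.ω_orthonormal.ne_zero j) <| eq_zero_of_phase_split_approx
    (K := fun τ => 2 ^ (s / 2) * ‖v‖ * C τ + 2 * ‖S.Mcl‖ * c) (c := 2 * c')
    (θ := fun τ t => -(τ / |t| ^ 2 * SD.lam j t)) (w := fun τ => W τ v) hμ
    (lt_min (lt_min ht₁ hε₁) SD.tstar_pos) ?_ ?_ ?_
  · exact tendsto_affine_div_atTop_zero hClim _ _
  · intro τ t ht hrt
    obtain ⟨ht₁, hε₁, htstar⟩ := hr t hrt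
    obtain ⟨hd, heig⟩ := SD.φ_eig j t htstar
    have hop := hbound τ t |t| ht₁ (abs_pos.2 ht) hε₁
    rw [show τ / |t| ^ 2 * t ^ 2 = τ by rw [sq_abs]; field_simp,
      rpow_abs_div_sq_add_sq_abs_rpow ht, ← div_eq_mul_inv,
      div_le_iff₀ (by positivity)] at hop
    calc _ ≤ _ := S.norm_exp_smul_Mcl_sub_le (W τ) hd heig (SD.ω_mem j) (τ / |t| ^ 2)
      _ ≤ C τ * |t| * 2 ^ (s / 2) * ‖v‖ + ‖S.Mcl‖ * (2 * (c * |t|)) := by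
        gcongr
        rw [norm_sub_rev]
        exact hc j t htstar
      _ = _ := by ring
  · intro τ t hτ ht hrt
    have htstar := (hr t hrt).2.2
    exact abs_odd_phase_sub_le hτ.le ht (hc' j t htstar) (hc' j (-t) (by rwa [abs_neg]))

/-- Suppose `N̂_{0,Q} ≠ 0` (equivalently, `μ_j ≠ 0` for some `j`).
Let `s ≥ 3`. Then there is no positive function `C(τ)` with
`lim_{τ→∞} C(τ)/|τ| = 0` such that
`‖M e^{-iτε⁻²A(t)} M⁻¹ P̂ − M₀ e^{-iτε⁻²t² M₀ Ŝ M₀} M₀⁻¹ P̂‖ εˢ(t²+ε²)^{-s/2}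
  ≤ C(τ) ε` for all `τ ∈ ℝ` and all sufficiently small `|t|` and `ε > 0`. -/
theorem sandwiched_exp_time_sharp_general (S : SandScheme) (SD : SpecData S.toBSScheme)
    (hN0Q : S.NhatQ0 SD ≠ 0) (s : ℝ) (hs : 3 ≤ s) :
    ¬ ∃ C : ℝ → ℝ, (∀ τ, 0 < C τ) ∧
        Filter.Tendsto (fun τ : ℝ => C τ / |τ|) Filter.atTop (nhds 0) ∧
        ∃ t₁ > (0 : ℝ), ∃ ε₁ > (0 : ℝ), ∀ τ t ε : ℝ,
          |t| ≤ t₁ → 0 < ε → ε ≤ ε₁ →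
          ‖(S.Mcl ∘L S.E t (τ / ε ^ 2) ∘L S.Minv
              - S.M₀ ∘L NormedSpace.exp
                  (((-Complex.I) * ((τ / ε ^ 2 * t ^ 2 : ℝ) : ℂ))
                    • (S.M₀ ∘L S.germHat ∘L S.M₀)) ∘L S.M₀inv)
              ∘L S.Ph‖ * (ε ^ s / (t ^ 2 + ε ^ 2) ^ (s / 2)) ≤ C τ * ε :=
  sandwiched_exp_time_sharp_general_general S SD hN0Q s
end
end
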